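/- arXiv:1606.05210 — 2 statements merged into one kernel-verified Lean document; each statement's English description precedes it below -/
import Mathlib

section
/- With the adversary weights w_1, …, w_n defined from a real a > 1 and a string x ∈ {0,1}^n: for every index i, if x_i = 0 then w_j ≤ w_i · a^(-2^{-n}) for all j with i < j ≤ n. -/
/-- The adversary weights (0-indexed): `advW a x 0 = a^(1/2)` is the weight `w_1`, and the
weight `w_{j+2} = advW a x (j+1)` equals `w_{j+1} · a^(2^{-(j+2)})` if `x_{j+1} = 1`
(i.e. `x j = true` 0-indexed) and `w_{j+1} · a^(-2^{-(j+2)})` otherwise. -/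
noncomputable def advW (a : ℝ) (x : ℕ → Bool) : ℕ → ℝ
  | 0 => a ^ ((2:ℝ)⁻¹)
  | j + 1 => advW a x j * a ^ (if x j then ((2:ℝ) ^ (j + 2))⁻¹ else -((2:ℝ) ^ (j + 2))⁻¹)

/-- The exponent of `a` in `advW`. -/
noncomputable def advE (x : ℕ → Bool) : ℕ → ℝ
  | 0 => (2:ℝ)⁻¹
  | j + 1 => advE x j + (if x j then ((2:ℝ) ^ (j + 2))⁻¹ else -((2:ℝ) ^ (j + 2))⁻¹)

lemma advW_eq_rpow (a : ℝ) (ha : 0 < a) (x : ℕ → Bool) (k : ℕ) :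
    advW a x k = a ^ (advE x k) := by
  induction k with
  | zero => simp [advW, advE]
  | succ j ih => rw [advW, advE, ih, ← Real.rpow_add ha]

lemma advE_le (x : ℕ → Bool) (i : ℕ) (hx : x i = false) :
    ∀ j, i < j → advE x j ≤ advE x i - ((2:ℝ) ^ (j + 1))⁻¹ := by
  intro j hj
  induction j, hj using Nat.le_induction with
  | base => simp [advE, hx]
  | succ j hj ih =>
    rw [advE]
    have h1 : (if x j then ((2:ℝ) ^ (j + 2))⁻¹ else -((2:ℝ) ^ (j + 2))⁻¹) ≤ ((2:ℝ) ^ (j + 2))⁻¹ := by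
      split
      · exact le_rfl
      · linarith [inv_pos.mpr (pow_pos (by norm_num : (0:ℝ) < 2) (j+2))]
    have hp : ((2:ℝ) ^ (j + 1))⁻¹ = 2 * ((2:ℝ) ^ (j + 2))⁻¹ := by
      rw [pow_succ]; field_simp; ring
    have he : ((2:ℝ) ^ (j + 1 + 1))⁻¹ = ((2:ℝ) ^ (j + 2))⁻¹ := rfl
    rw [he]; linarith

/-- With the adversary weights `w_1, …, w_n` defined from `a > 1` and `x ∈ {0,1}^n`:
for every index `i`, if `x_i = 0` then `w_j ≤ w_i · a^(-2^{-n})` for all `j` with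
`i < j ≤ n`.  (Stated 0-indexed: the bit `x_i` is `x i`, the weight `w_i` is
`advW a x (i - 1)`, so the indices here are shifted down by one.) -/
theorem advW_le_of_bit_eq_zero
    (n : ℕ) (a : ℝ) (ha : 1 < a) (x : ℕ → Bool) (i j : ℕ)
    (hij : i < j) (hjn : j < n) (hx : x i = false) :
    advW a x j ≤ advW a x i * a ^ (-((2:ℝ) ^ n)⁻¹) := by
  have ha0 : (0:ℝ) < a := lt_trans one_pos ha
  rw [advW_eq_rpow a ha0, advW_eq_rpow a ha0, ← Real.rpow_add ha0]
  apply Real.rpow_le_rpow_left_iff ha |>.mpr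
  have h1 := advE_le x i hx j hij
  have h2 : ((2:ℝ) ^ n)⁻¹ ≤ ((2:ℝ) ^ (j + 1))⁻¹ := by
    apply inv_anti₀ (by positivity)
    exact pow_le_pow_right₀ (by norm_num) hjn
  linarith
end

section
/- With the adversary weights w_1, …, w_n defined from a real a > 1 and a string x ∈ {0,1}^n: for every index i, if x_i = 1 then w_j ≥ w_i · a^(2^{-n}) for all j with i < j ≤ n. -/
lemma advW_pos (a : ℝ) (ha : 0 < a) (x : ℕ → Bool) (k : ℕ) : 0 < advW a x k := by
  induction k with
  | zero => exact Real.rpow_pos_of_pos ha _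
  | succ j ih => exact mul_pos ih (Real.rpow_pos_of_pos ha _)

lemma advW_key (a : ℝ) (ha : 1 < a) (x : ℕ → Bool) (i : ℕ) (hx : x i = true) :
    ∀ j, i < j → advW a x i * a ^ (((2:ℝ) ^ (j + 1))⁻¹) ≤ advW a x j := by
  have ha0 : 0 < a := lt_trans one_pos ha
  intro j hj
  induction j, hj using Nat.le_induction with
  | base =>
    rw [show advW a x (i + 1) = advW a x i * a ^ (((2:ℝ) ^ (i + 2))⁻¹) by
      simp [advW, hx]]
  | succ j hj ih =>
    have hstep : advW a x j * a ^ (-((2:ℝ) ^ (j + 2))⁻¹) ≤ advW a x (j + 1) := by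
      rw [show advW a x (j + 1) = advW a x j * a ^ (if x j then ((2:ℝ) ^ (j + 2))⁻¹ else -((2:ℝ) ^ (j + 2))⁻¹) from rfl]
      apply mul_le_mul_of_nonneg_left _ (le_of_lt (advW_pos a ha0 x j))
      apply Real.rpow_le_rpow_of_exponent_le (le_of_lt ha)
      split <;> simp <;> positivity
    calc advW a x i * a ^ (((2:ℝ) ^ (j + 1 + 1))⁻¹)
        = advW a x i * a ^ (((2:ℝ) ^ (j + 1))⁻¹) * a ^ (-((2:ℝ) ^ (j + 2))⁻¹) := by
          rw [mul_assoc, ← Real.rpow_add ha0]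
          congr 2
          have : ((2:ℝ) ^ (j + 2)) = 2 * (2:ℝ) ^ (j + 1) := by ring
          rw [show (j+1+1) = j+2 by ring, this]
          have h2 : ((2:ℝ) ^ (j + 1)) ≠ 0 := by positivity
          field_simp
          ring
      _ ≤ advW a x j * a ^ (-((2:ℝ) ^ (j + 2))⁻¹) := by
          apply mul_le_mul_of_nonneg_right ih (le_of_lt (Real.rpow_pos_of_pos ha0 _))
      _ ≤ advW a x (j + 1) := hstep

/-- With the adversary weights `w_1, …, w_n` defined from `a > 1` and `x ∈ {0,1}^n`:
for every index `i`, if `x_i = 1` then `w_j ≥ w_i · a^(2^{-n})` for all `j` with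
`i < j ≤ n`.  (Stated 0-indexed: the bit `x_i` is `x i`, the weight `w_i` is
`advW a x (i - 1)`, so the indices here are shifted down by one.) -/
theorem advW_ge_of_bit_eq_one
    (n : ℕ) (a : ℝ) (ha : 1 < a) (x : ℕ → Bool) (i j : ℕ)
    (hij : i < j) (hjn : j < n) (hx : x i = true) :
    advW a x i * a ^ (((2:ℝ) ^ n)⁻¹) ≤ advW a x j := by
  have ha0 : 0 < a := lt_trans one_pos ha
  have key := advW_key a ha x i hx j hij
  refine le_trans (mul_le_mul_of_nonneg_left ?_ (le_of_lt (advW_pos a ha0 x i))) key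
  apply Real.rpow_le_rpow_of_exponent_le (le_of_lt ha)
  apply inv_anti₀ (by positivity)
  exact pow_le_pow_right₀ (by norm_num) hjn
end
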